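/- Let A be an abelian category with enough projectives and F : A → B a right exact additive functor to an abelian category B. If the first left derived functor L¹F is left exact, then LⁱF = 0 for all i ≥ 2. -/

import Mathlib

/-!
Dimension shifting. If `0 → K → P → X → 0` is exact with `P` projective, splicing a projective
resolution of `K` onto `P → X` gives a projective resolution of `X`, whence
`L_{n+2}F X ≅ L_{n+1}F K`. Taking for `P → X` the chosen epimorphism `Projective.π X`,
`L¹F K` injects into `L¹F P = 0` because `L¹F` is left exact; so `L₂F = 0`, and the same
isomorphism propagates the vanishing to every `L_{n+2}F`.
-/

open CategoryTheory CategoryTheory.Limits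

universe v u v' u'

namespace CategoryTheory

variable {C : Type u} [Category.{v} C] [Abelian C]

namespace ShortComplex

variable {S : ShortComplex C}

lemma Exact.epi_comp (hS : S.Exact) {X : C} (p : X ⟶ S.X₁) [Epi p] :
    (ShortComplex.mk (p ≫ S.f) S.g (by simp)).Exact :=
  (exact_iff_of_epi_of_isIso_of_mono (S₁ := ShortComplex.mk (p ≫ S.f) S.g (by simp)) (S₂ := S)
    { τ₁ := p, τ₂ := 𝟙 _, τ₃ := 𝟙 _ }).2 hS

lemma Exact.comp_mono (hS : S.Exact) {Y : C} (i : S.X₃ ⟶ Y) [Mono i] :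
    (ShortComplex.mk S.f (S.g ≫ i) (by simp)).Exact :=
  (exact_iff_of_epi_of_isIso_of_mono (S₁ := S) (S₂ := ShortComplex.mk S.f (S.g ≫ i) (by simp))
    { τ₁ := 𝟙 _, τ₂ := 𝟙 _, τ₃ := i }).1 hS

end ShortComplex

namespace ChainComplex

variable (K : ChainComplex C ℕ) {X : C} (f : K.X 0 ⟶ X) (w : K.d 1 0 ≫ f = 0)

lemma augment_exactAt_one_iff :
    (K.augment f w).ExactAt 1 ↔ (ShortComplex.mk (K.d 1 0) f w).Exact :=
  HomologicalComplex.exactAt_iff' _ 2 1 0 (by simp) (by simp)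

lemma augment_exactAt_succ_succ_iff (n : ℕ) :
    (K.augment f w).ExactAt (n + 2) ↔ K.ExactAt (n + 1) := by
  rw [HomologicalComplex.exactAt_iff' _ (n + 3) (n + 2) (n + 1) (by simp) (by simp),
    HomologicalComplex.exactAt_iff' _ (n + 2) (n + 1) n (by simp) (by simp)]
  rfl

end ChainComplex

namespace ProjectiveResolution

noncomputable def ofExact {Z : C} (K : ChainComplex C ℕ) (hK : ∀ n, Projective (K.X n))
    (f : K.X 0 ⟶ Z) (w : K.d 1 0 ≫ f = 0) (h₀ : (ShortComplex.mk _ _ w).Exact) [Epi f]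
    (h : ∀ n, K.ExactAt (n + 1)) : ProjectiveResolution Z where
  complex := K
  π := (ChainComplex.toSingle₀Equiv _ _).symm ⟨f, w⟩
  quasiIso := ⟨fun n => by
    cases n with
    | zero =>
      rw [ChainComplex.quasiIsoAt₀_iff, ShortComplex.quasiIso_iff_of_zeros']
      · refine (ShortComplex.exact_and_epi_g_iff_of_iso ?_).2 ⟨h₀, ‹Epi f›⟩
        exact ShortComplex.isoMk (Iso.refl _) (Iso.refl _) (Iso.refl _)
          (by erw [Category.id_comp, Category.comp_id]; rfl)
          (by erw [Category.id_comp, Category.comp_id]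
              exact (ChainComplex.toSingle₀Equiv_symm_apply_f_zero _ _).symm)
      · exact K.shape 0 0 (by simp)
      all_goals exact HomologicalComplex.single_obj_d (c := ComplexShape.down ℕ) 0 Z _ _
    | succ n =>
      rw [quasiIsoAt_iff_exactAt' _ _ (ChainComplex.exactAt_succ_single_obj _ _)]
      exact h n⟩

variable {S : ShortComplex C} (Q : ProjectiveResolution S.X₁)

lemma complex_d_comp_π_f_zero_comp : Q.complex.d 1 0 ≫ Q.π.f 0 ≫ S.f = 0 := by
  erw [← Category.assoc, Q.complex_d_comp_π_f_zero, zero_comp]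

noncomputable def ofShortExact (hS : S.ShortExact) [Projective S.X₂] :
    ProjectiveResolution S.X₃ := by
  -- `Q.π.f 0` lands in `((single₀ C).obj S.X₁).X 0`, which is only defeq to `S.X₁`,
  -- so the instances below are stated at the types the lemmas ask for.
  have : @Mono _ _ (((ChainComplex.single₀ C).obj S.X₁).X 0) S.X₂ S.f := hS.mono_f
  have : @Epi _ _ (Q.complex.X 0) S.X₁ (Q.π.f 0) := (inferInstance : Epi (Q.π.f 0))
  have : @Epi _ _ ((Q.complex.augment (Q.π.f 0 ≫ S.f) Q.complex_d_comp_π_f_zero_comp).X 0)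
    S.X₃ S.g := hS.epi_g
  refine ofExact (Q.complex.augment (Q.π.f 0 ≫ S.f) Q.complex_d_comp_π_f_zero_comp)
    (fun | 0 => ‹Projective S.X₂› | n + 1 => Q.projective n) S.g
    (by erw [ChainComplex.augment_d_one_zero, Category.assoc, S.zero, comp_zero])
    (hS.exact.epi_comp (Q.π.f 0)) (fun n => ?_)
  cases n with
  | zero => exact (ChainComplex.augment_exactAt_one_iff _ _ _).2 (Q.exact₀.comp_mono S.f)
  | succ n =>
    exact (ChainComplex.augment_exactAt_succ_succ_iff _ _ _ n).2 (Q.complex_exactAt_succ n)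

end ProjectiveResolution

namespace Functor

variable [HasProjectiveResolutions C] {D : Type u'} [Category.{v'} D] [Abelian D]
  (F : C ⥤ D) [F.Additive]

noncomputable def leftDerivedSuccSuccObjIsoOfShortExact {S : ShortComplex C}
    (hS : S.ShortExact) [Projective S.X₂] (Q : ProjectiveResolution S.X₁) (n : ℕ) :
    (F.leftDerived (n + 2)).obj S.X₃ ≅ (F.leftDerived (n + 1)).obj S.X₁ :=
  -- the two short complexes in the middle coincide definitionally: `augment` shifts degrees by one
  (Q.ofShortExact hS).isoLeftDerivedObj F (n + 2) ≪≫
    ((F.mapHomologicalComplex _).obj (Q.ofShortExact hS).complex).homologyIsoSc'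
      (n + 3) (n + 2) (n + 1) (by simp) (by simp) ≪≫
    (((F.mapHomologicalComplex _).obj Q.complex).homologyIsoSc'
      (n + 2) (n + 1) n (by simp) (by simp)).symm ≪≫
    (Q.isoLeftDerivedObj F (n + 1)).symm

lemma isZero_leftDerived_one_obj_of_mono [(F.leftDerived 1).PreservesMonomorphisms]
    {K P : C} (i : K ⟶ P) [Mono i] [Projective P] : IsZero ((F.leftDerived 1).obj K) :=
  IsZero.of_mono ((F.leftDerived 1).map i) (F.isZero_leftDerived_obj_projective_succ 0 P)

end Functor

end CategoryTheory

theorem statement3_general {A : Type u} [Category.{v} A] [Abelian A] [EnoughProjectives A]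
    {B : Type u'} [Category.{v'} B] [Abelian B]
    (F : A ⥤ B) [F.Additive]
    (h1 : PreservesFiniteLimits (F.leftDerived 1)) :
    ∀ i : ℕ, 2 ≤ i → ∀ X : A, IsZero ((F.leftDerived i).obj X) := by
  have hS (X : A) : (ShortComplex.mk _ _ (kernel.condition (Projective.π X))).ShortExact :=
    { exact := ShortComplex.exact_of_f_is_kernel _ (kernelIsKernel _) }
  have hL (k : ℕ) (X : A) : IsZero ((F.leftDerived (k + 2)).obj X) := by
    induction k generalizing X with
    | zero =>
      exact (F.isZero_leftDerived_one_obj_of_mono (kernel.ι _)).of_iso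
        (F.leftDerivedSuccSuccObjIsoOfShortExact (hS X) (.of _) 0)
    | succ k ih =>
      exact (ih _).of_iso (F.leftDerivedSuccSuccObjIsoOfShortExact (hS X) (.of _) (k + 1))
  intro i hi X
  obtain ⟨k, rfl⟩ := Nat.exists_eq_add_of_le' hi
  exact hL k X

/-- Let `A` be an abelian category with enough projectives and
`F : A ⥤ B` a right exact additive functor to an abelian category `B`.  If the first
left derived functor `L¹F` is left exact, then `LⁱF = 0` for all `i ≥ 2`. -/
theorem statement3 {A : Type u} [Category.{v} A] [Abelian A] [EnoughProjectives A]
    {B : Type u'} [Category.{v'} B] [Abelian B]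
    (F : A ⥤ B) [F.Additive] [PreservesFiniteColimits F]
    (h1 : PreservesFiniteLimits (F.leftDerived 1)) :
    ∀ i : ℕ, 2 ≤ i → ∀ X : A, IsZero ((F.leftDerived i).obj X) :=
  statement3_general F h1
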